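/- arXiv:1912.13074 — 9 statements merged into one kernel-verified Lean document; each statement's English description precedes it below -/
import Mathlib

section
/- Let c_v > 1/2 and define f(t) := t − (((2c_v+1)t + 1)/((2c_v+1) + t))^{(c_v+1)/c_v} for t > 0. Then f(t) > 0 for all t > 1. -/
/-!
With `a = 2 c_v + 1` the exponent `c_v / (c_v + 1)` equals `(a - 1) / (a + 1)`, so the claim is
`(a t + 1) / (a + t) < t ^ ((a - 1) / (a + 1))`. In logarithmic form the gap between the two sides
vanishes at `t = 1` and has derivative `a (a - 1) (t - 1)² / ((a + 1) t (a t + 1) (a + t)) > 0`.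
-/

open Real Set

lemma hasDerivAt_log_rpow_sub_log_mobius {a x : ℝ} (ha : 0 ≤ a) (hx : 0 < x) :
    HasDerivAt (fun y => (a - 1) / (a + 1) * log y - log (a * y + 1) + log (a + y))
      (a * (a - 1) * (x - 1) ^ 2 / ((a + 1) * x * (a * x + 1) * (a + x))) x := by
  have hax1 : 0 < a * x + 1 := by positivity
  have hax : 0 < a + x := by positivity
  have hnum : HasDerivAt (fun y => log (a * y + 1)) (a * 1 / (a * x + 1)) x :=
    (((hasDerivAt_id x).const_mul a).add_const 1).log hax1.ne'
  have hden : HasDerivAt (fun y => log (a + y)) (1 / (a + x)) x :=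
    ((hasDerivAt_id x).const_add a).log hax.ne'
  refine ((((hasDerivAt_log hx.ne').const_mul ((a - 1) / (a + 1))).sub hnum).add hden).congr_deriv
    ?_
  field_simp
  ring

lemma strictMonoOn_log_rpow_sub_log_mobius {a : ℝ} (ha : 1 < a) :
    StrictMonoOn (fun y => (a - 1) / (a + 1) * log y - log (a * y + 1) + log (a + y)) (Ici 1) := by
  have hderiv (x : ℝ) (hx : 1 ≤ x) :=
    hasDerivAt_log_rpow_sub_log_mobius (a := a) (x := x) (by linarith) (by linarith)
  refine strictMonoOn_of_deriv_pos (convex_Ici 1)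
    (fun x hx => (hderiv x hx).continuousAt.continuousWithinAt) fun x hx => ?_
  rw [interior_Ici, mem_Ioi] at hx
  rw [(hderiv x hx.le).deriv]
  have hx1 : 0 < (x - 1) ^ 2 := pow_pos (sub_pos.2 hx) 2
  have : 0 < a - 1 := sub_pos.2 ha
  positivity

lemma mobius_lt_rpow {a t : ℝ} (ha : 1 < a) (ht : 1 < t) :
    (a * t + 1) / (a + t) < t ^ ((a - 1) / (a + 1)) := by
  have ht0 : 0 < t := by linarith
  have hat1 : 0 < a * t + 1 := by positivity
  have hat : 0 < a + t := by positivity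
  have hgap := strictMonoOn_log_rpow_sub_log_mobius ha self_mem_Ici ht.le ht
  simp only [log_one, mul_zero, mul_one, zero_sub, neg_add_cancel] at hgap
  rw [← log_lt_log_iff (by positivity) (by positivity), log_div hat1.ne' hat.ne',
    log_rpow ht0]
  linarith

/-- **Lemma 2.** The function `f(t) = t - (((2c_v+1)t+1)/((2c_v+1)+t))^{(c_v+1)/c_v}`
is positive for `t > 1`. -/
theorem f_pos (cv : ℝ) (hcv : 1 / 2 < cv) :
    ∀ t : ℝ, 1 < t →
      0 < t - (((2 * cv + 1) * t + 1) / ((2 * cv + 1) + t)) ^ ((cv + 1) / cv) := by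
  intro t ht
  have hcv0 : 0 < cv := by linarith
  have hbound := mobius_lt_rpow (a := 2 * cv + 1) (by linarith) ht
  have hexp : (2 * cv + 1 - 1) / (2 * cv + 1 + 1) = ((cv + 1) / cv)⁻¹ := by
    field_simp
    ring
  rw [hexp, lt_rpow_inv_iff_of_pos (by positivity) (by linarith) (by positivity)] at hbound
  linarith
end

section
/- Let c_v > 1/2, ρ₋, ρ₊ > 0, 0 < p₋ < p₊ and v₋, v₊ ∈ ℝ satisfy −2√(c_v(c_v+1))·√(p₊/ρ₊)·(1−(p₋/p₊)^{1/(2(c_v+1))}) < v₋ − v₊ < (p₊−p₋)·√(2c_v/(ρ₋(p₋+(2c_v+1)p₊))). Then there exists a unique p_M with p₋ < p_M < p₊ such that v₋ − (p_M−p₋)·√(2c_v/(ρ₋(p₋+(2c_v+1)p_M))) = v₊ − 2√(c_v(c_v+1))·√(p₊/ρ₊)·(1−(p_M/p₊)^{1/(2(c_v+1))}). (The common value v_M of both sides is the velocity of the middle states: the state (ρ₋,v₋,p₋) is connected to pressure p_M and velocity v_M by an admissible 1-shock, whose curve is given by the left-hand expression, and pressure p_M, velocity v_M is connected to (ρ₊,v₊,p₊)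 by a 3-rarefaction wave, whose curve is given by the right-hand expression.) -/
/-!
The shock velocity drop is strictly increasing in `p ≥ p₋`, since its square is a positive
multiple of `(p - p₋)² / (p₋ + (2c_v+1)p)`; the rarefaction drop is strictly decreasing in `p`.
Their difference is thus continuous and strictly increasing on `[p₋, p₊]`, and the hypotheses
place `v₋ - v₊` strictly between its endpoint values, so it is attained exactly once.
-/

open Set

section IntermediateValue

variable {α δ : Type*} [ConditionallyCompleteLinearOrder α] [TopologicalSpace α] [OrderTopology α]
  [DenselyOrdered α] [LinearOrder δ] [TopologicalSpace δ] [OrderClosedTopology δ]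

theorem ContinuousOn.existsUnique_mem_Ioo_eq_of_strictMonoOn {a b : α} {f : α → δ}
    (hab : a ≤ b) (hf : ContinuousOn f (Icc a b)) (hmono : StrictMonoOn f (Ioo a b)) {y : δ}
    (hy : y ∈ Ioo (f a) (f b)) : ∃! x, x ∈ Ioo a b ∧ f x = y := by
  obtain ⟨x, hx, rfl⟩ := intermediate_value_Ioo hab hf hy
  exact ⟨x, ⟨hx, rfl⟩, fun x' ⟨hx', hfx'⟩ => hmono.injOn hx' hx hfx'⟩

end IntermediateValue

/-- The middle velocity on the 1-shock curve through `(ρ, v, p₀)` is `v - shockCurve cv ρ p₀ p`. -/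
noncomputable def shockCurve (cv ρ p₀ p : ℝ) : ℝ :=
  (p - p₀) * √(2 * cv / (ρ * (p₀ + (2 * cv + 1) * p)))

/-- The middle velocity on the backward 3-rarefaction curve through `(ρ, v, p₀)` is
`v - rarefactionCurve cv ρ p₀ p`. -/
noncomputable def rarefactionCurve (cv ρ p₀ p : ℝ) : ℝ :=
  2 * √(cv * (cv + 1)) * √(p₀ / ρ) * (1 - (p / p₀) ^ (1 / (2 * (cv + 1))))

theorem sq_sub_div_strictMonoOn {p₀ k : ℝ} (hp₀ : 0 < p₀) (hk : 0 ≤ k) :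
    StrictMonoOn (fun p => (p - p₀) ^ 2 / (p₀ + k * p)) (Ici p₀) := by
  intro a (ha : p₀ ≤ a) b (hb : p₀ ≤ b) hab
  have hda : 0 < p₀ + k * a := by nlinarith
  have hdb : 0 < p₀ + k * b := by nlinarith
  have hsq : (a - p₀) ^ 2 < (b - p₀) ^ 2 := by nlinarith
  rw [div_lt_div_iff₀ hda hdb]
  have hcross : 0 ≤ k * ((a - p₀) * (b - p₀)) * (b - a) :=
    mul_nonneg (mul_nonneg hk (mul_nonneg (sub_nonneg.2 ha) (sub_nonneg.2 hb)))
      (sub_nonneg.2 hab.le)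
  nlinarith [mul_pos hp₀ (sub_pos.2 hsq)]

theorem shockCurve_eq_sqrt {cv ρ p₀ p : ℝ} (hp : p₀ ≤ p) :
    shockCurve cv ρ p₀ p = √(2 * cv / ρ * ((p - p₀) ^ 2 / (p₀ + (2 * cv + 1) * p))) := by
  rw [shockCurve, ← Real.sqrt_sq (sub_nonneg.2 hp), ← Real.sqrt_mul (sq_nonneg _),
    Real.sqrt_sq (sub_nonneg.2 hp), mul_div_assoc', div_mul_div_comm, mul_comm (2 * cv)]

theorem shockCurve_strictMonoOn {cv ρ p₀ : ℝ} (hcv : 0 < cv) (hρ : 0 < ρ) (hp₀ : 0 < p₀) :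
    StrictMonoOn (shockCurve cv ρ p₀) (Ici p₀) := by
  intro a (ha : p₀ ≤ a) b (hb : p₀ ≤ b) hab
  rw [shockCurve_eq_sqrt ha, shockCurve_eq_sqrt hb]
  have hmono := sq_sub_div_strictMonoOn hp₀ (k := 2 * cv + 1) (by positivity) ha hb hab
  have hda : 0 < p₀ + (2 * cv + 1) * a := by nlinarith
  exact Real.sqrt_lt_sqrt (by positivity) (mul_lt_mul_of_pos_left hmono (by positivity))

theorem shockCurve_continuousOn {cv ρ p₀ : ℝ} (hcv : 0 < cv) (hρ : 0 < ρ) (hp₀ : 0 < p₀) :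
    ContinuousOn (shockCurve cv ρ p₀) (Ici p₀) := by
  intro p (hp : p₀ ≤ p)
  have : 0 < ρ * (p₀ + (2 * cv + 1) * p) := mul_pos hρ (by nlinarith)
  unfold shockCurve
  fun_prop (disch := exact this.ne')

theorem rarefactionCurve_strictAntiOn {cv ρ p₀ : ℝ} (hcv : 0 < cv) (hρ : 0 < ρ) (hp₀ : 0 < p₀) :
    StrictAntiOn (rarefactionCurve cv ρ p₀) (Ici 0) := by
  intro a (ha : 0 ≤ a) b (hb : 0 ≤ b) hab
  have hpow : (a / p₀) ^ (1 / (2 * (cv + 1))) < (b / p₀) ^ (1 / (2 * (cv + 1))) :=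
    Real.rpow_lt_rpow (div_nonneg ha hp₀.le) (by gcongr) (by positivity)
  have hcoef : 0 < 2 * √(cv * (cv + 1)) * √(p₀ / ρ) := by positivity
  exact mul_lt_mul_of_pos_left (sub_lt_sub_left hpow 1) hcoef

theorem rarefactionCurve_continuous {cv ρ p₀ : ℝ} (hcv : 0 < cv) :
    Continuous (rarefactionCurve cv ρ p₀) := by
  unfold rarefactionCurve
  fun_prop (disch := positivity)

@[simp] theorem shockCurve_self (cv ρ p₀ : ℝ) : shockCurve cv ρ p₀ p₀ = 0 := by
  simp [shockCurve]

@[simp] theorem rarefactionCurve_self {cv ρ p₀ : ℝ} (hp₀ : p₀ ≠ 0) :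
    rarefactionCurve cv ρ p₀ p₀ = 0 := by
  simp [rarefactionCurve, hp₀]

/-- Existence and uniqueness of the middle pressure `p_M`: the 1-shock curve through
`(ρ₋,v₋,p₋)` and the 3-rarefaction curve through `(ρ₊,v₊,p₊)` intersect in exactly one
point with `p₋ < p_M < p₊`. -/
theorem middle_state_exists_unique
    (cv ρm ρp pm pp vm vp : ℝ)
    (hcv : 1 / 2 < cv) (hρm : 0 < ρm) (hρp : 0 < ρp) (hpm : 0 < pm) (hpmp : pm < pp)
    (hlow : -2 * Real.sqrt (cv * (cv + 1)) * Real.sqrt (pp / ρp)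
        * (1 - (pm / pp) ^ (1 / (2 * (cv + 1)))) < vm - vp)
    (hhigh : vm - vp < (pp - pm) * Real.sqrt (2 * cv / (ρm * (pm + (2 * cv + 1) * pp)))) :
    ∃! pM : ℝ, pm < pM ∧ pM < pp ∧
      vm - (pM - pm) * Real.sqrt (2 * cv / (ρm * (pm + (2 * cv + 1) * pM)))
        = vp - 2 * Real.sqrt (cv * (cv + 1)) * Real.sqrt (pp / ρp)
            * (1 - (pM / pp) ^ (1 / (2 * (cv + 1)))) := by
  have hcv₀ : 0 < cv := by linarith
  have hpp : 0 < pp := hpm.trans hpmp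
  let f p := shockCurve cv ρm pm p - rarefactionCurve cv ρp pp p
  have hcont : ContinuousOn f (Icc pm pp) :=
    ((shockCurve_continuousOn hcv₀ hρm hpm).mono Icc_subset_Ici_self).sub
      (rarefactionCurve_continuous hcv₀).continuousOn
  have hmono : StrictMonoOn f (Ioo pm pp) := fun a ha b hb hab => by
    have hS := shockCurve_strictMonoOn hcv₀ hρm hpm ha.1.le hb.1.le hab
    have hR := rarefactionCurve_strictAntiOn hcv₀ hρp hpp
      (hpm.trans ha.1).le (hpm.trans hb.1).le hab
    exact sub_lt_sub hS hR
  have hends : vm - vp ∈ Ioo (f pm) (f pp) := by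
    simp only [f, shockCurve_self, rarefactionCurve_self hpp.ne', zero_sub, sub_zero]
    exact ⟨by rw [rarefactionCurve]; linarith, hhigh⟩
  refine (existsUnique_congr fun p => ?_).2
    (hcont.existsUnique_mem_Ioo_eq_of_strictMonoOn hpmp.le hmono hends)
  simp only [f, shockCurve, rarefactionCurve, mem_Ioo, and_assoc]
  constructor <;> rintro ⟨h₁, h₂, h₃⟩ <;> exact ⟨h₁, h₂, by linarith⟩
end

section
/- Let c_v > 1/2, ρ₋ > 0, 0 < p₋ < p₊ and v₋ > 0 satisfy ρ₋v₋² < 2c_v(p₊−p₋)²/((2c_v+1)p₊ + p₋). Then: (a) ρ₋v₋² < p₊ − p₋, so that ρ_K := ρ₋(p₊−p₋)/(p₊−p₋−ρ₋v₋²) is well defined and ρ_K > ρ₋; (b) for all ρ₁, ρ₂ with ρ₋ < ρ₁ < ρ_K < ρ₂, the discriminant (ρ₂−ρ₁)(ρ₁−ρ₋)·[(ρ₂−ρ₋)(p₊−p₋) − ρ₋ρ₂v₋²] is strictly positive; and (c) β := (ρ₋(ρ₂−ρ₁)v₋)/(ρ₁(ρ₂−ρ₋)) − √((ρ₂−ρ₁)(ρ₁−ρ₋)[(ρ₂−ρ₋)(p₊−p₋)−ρ₋ρ₂v₋²])/(ρ₁(ρ₂−ρ₋))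 satisfies β < v₋. -/
/-!
Everything reduces to elementary inequalities. Clearing the denominator, the bound on
`ρ₋v₋²` is below `p₊ − p₋` because `2c_v(p₊ − p₋) < (2c_v + 1)p₊ + p₋`; hence `ρ_K > ρ₋`.
The last factor of the discriminant equals `ρ₂(p₊ − p₋ − ρ₋v₋²) − ρ₋(p₊ − p₋)`, which is
positive exactly when `ρ₂ > ρ_K`. Finally `β < v₋` since the square root only lowers `β`
and the coefficient `ρ₋(ρ₂ − ρ₁)/(ρ₁(ρ₂ − ρ₋))` of `v₋` is below `1`, by
`ρ₁(ρ₂ − ρ₋) − ρ₋(ρ₂ − ρ₁) = ρ₂(ρ₁ − ρ₋)`.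
-/

lemma two_mul_sq_div_lt_sub {c pm pp : ℝ} (hc : 0 < 2 * c + 1) (hpm : 0 < pm) (hpmp : pm < pp) :
    2 * c * (pp - pm) ^ 2 / ((2 * c + 1) * pp + pm) < pp - pm := by
  have hden : 0 < (2 * c + 1) * pp + pm := by nlinarith
  rw [div_lt_iff₀ hden]
  nlinarith [mul_pos (sub_pos.mpr hpmp) (show 0 < pp + (2 * c + 1) * pm by nlinarith)]

lemma lt_mul_div_sub {ρ e P : ℝ} (hρ : 0 < ρ) (he : 0 < e) (heP : e < P) :
    ρ < ρ * P / (P - e) := by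
  rw [lt_div_iff₀ (sub_pos.mpr heP)]
  nlinarith

lemma sub_mul_sub_mul_sq_pos_of_div_lt {ρm ρ2 P v : ℝ} (hD : 0 < P - ρm * v ^ 2)
    (hρ2 : ρm * P / (P - ρm * v ^ 2) < ρ2) :
    0 < (ρ2 - ρm) * P - ρm * ρ2 * v ^ 2 := by
  rw [div_lt_iff₀ hD] at hρ2
  linarith

lemma mul_sub_lt_mul_sub {ρm ρ1 ρ2 : ℝ} (hρm : 0 < ρm) (h1 : ρm < ρ1) (h2 : ρ1 < ρ2) :
    ρm * (ρ2 - ρ1) < ρ1 * (ρ2 - ρm) := by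
  have key : ρ1 * (ρ2 - ρm) - ρm * (ρ2 - ρ1) = ρ2 * (ρ1 - ρm) := by ring
  nlinarith [mul_pos (hρm.trans (h1.trans h2)) (sub_pos.mpr h1)]

lemma mul_sub_mul_div_sub_div_lt {ρm ρ1 ρ2 v S : ℝ} (hρm : 0 < ρm) (h1 : ρm < ρ1)
    (h2 : ρ1 < ρ2) (hv : 0 < v) (hS : 0 ≤ S) :
    ρm * (ρ2 - ρ1) * v / (ρ1 * (ρ2 - ρm)) - S / (ρ1 * (ρ2 - ρm)) < v := by
  have hA : 0 < ρ1 * (ρ2 - ρm) := mul_pos (hρm.trans h1) (by linarith)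
  have hcoef : ρm * (ρ2 - ρ1) * v / (ρ1 * (ρ2 - ρm)) < v := by
    rw [div_lt_iff₀ hA]
    nlinarith [mul_sub_lt_mul_sub hρm h1 h2]
  have hsqrt : 0 ≤ S / (ρ1 * (ρ2 - ρm)) := div_nonneg hS hA.le
  linarith

/-- Well-definition of `ρ_K`, positivity of the discriminant and `β < v₋`. -/
theorem rhoK_discriminant_beta
    (cv ρm pm pp vm : ℝ)
    (hcv : 1 / 2 < cv) (hρm : 0 < ρm) (hpm : 0 < pm) (hpmp : pm < pp) (hvm : 0 < vm)
    (hmain : ρm * vm ^ 2 < 2 * cv * (pp - pm) ^ 2 / ((2 * cv + 1) * pp + pm)) :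
    ρm * vm ^ 2 < pp - pm ∧
    ρm < ρm * (pp - pm) / (pp - pm - ρm * vm ^ 2) ∧
    ∀ ρ1 ρ2 : ℝ, ρm < ρ1 → ρ1 < ρm * (pp - pm) / (pp - pm - ρm * vm ^ 2) →
      ρm * (pp - pm) / (pp - pm - ρm * vm ^ 2) < ρ2 →
        0 < (ρ2 - ρ1) * (ρ1 - ρm) * ((ρ2 - ρm) * (pp - pm) - ρm * ρ2 * vm ^ 2) ∧
        ρm * (ρ2 - ρ1) * vm / (ρ1 * (ρ2 - ρm))
            - Real.sqrt ((ρ2 - ρ1) * (ρ1 - ρm)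
                * ((ρ2 - ρm) * (pp - pm) - ρm * ρ2 * vm ^ 2)) / (ρ1 * (ρ2 - ρm))
          < vm := by
  have hsub : ρm * vm ^ 2 < pp - pm :=
    hmain.trans (two_mul_sq_div_lt_sub (by linarith) hpm hpmp)
  have hK : ρm < ρm * (pp - pm) / (pp - pm - ρm * vm ^ 2) :=
    lt_mul_div_sub hρm (by positivity) hsub
  refine ⟨hsub, hK, fun ρ1 ρ2 h1 h1K hK2 => ?_⟩
  have h12 : ρ1 < ρ2 := h1K.trans hK2
  have hdisc : 0 < (ρ2 - ρ1) * (ρ1 - ρm) * ((ρ2 - ρm) * (pp - pm) - ρm * ρ2 * vm ^ 2) :=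
    mul_pos (mul_pos (sub_pos.mpr h12) (sub_pos.mpr h1))
      (sub_mul_sub_mul_sq_pos_of_div_lt (sub_pos.mpr hsub) hK2)
  exact ⟨hdisc, mul_sub_mul_div_sub_div_lt hρm h1 h12 hvm (Real.sqrt_nonneg _)⟩
end

section
/- Let c_v > 1/2, ρ₋ > 0, 0 < p₋ < p₊ and v₋ > 0 satisfy ρ₋v₋² < 2c_v(p₊−p₋)²/((2c_v+1)p₊ + p₋), set ρ_K := ρ₋(p₊−p₋)/(p₊−p₋−ρ₋v₋²), let ρ₋ < ρ₁ < ρ_K < ρ₂ and p₁, p₂ > 0, and define β := (ρ₋(ρ₂−ρ₁)v₋)/(ρ₁(ρ₂−ρ₋)) − √((ρ₂−ρ₁)(ρ₁−ρ₋)[(ρ₂−ρ₋)(p₊−p₋)−ρ₋ρ₂v₋²])/(ρ₁(ρ₂−ρ₋)), μ₀ := (ρ₁β−ρ₋v₋)/(ρ₁−ρ₋), μ₁ := −ρ₁β/(ρ₂−ρ₁), ε₁ := (1/ρ₁)(p₋ − p₁ + ρ₁ρ₋(v₋−β)²/(ρ₁−ρ₋)), ε₂ := (p₊−p₂)/ρ₂,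 ε̃₁ := v₋² − β² − 2c_v(p₁/ρ₁ − p₋/ρ₋) − 2(ρ₁−ρ₋)(p₁β−p₋v₋)/(ρ₋ρ₁(v₋−β)) + (p₁−p₋)/ρ₁ − ρ₋(v₋−β)²/(ρ₁−ρ₋), ε̃₂ := v₋² − 2c_v(p₂/ρ₂ − p₋/ρ₋) − 2(ρ₁−ρ₋)(p₁β−p₋v₋)/(ρ₋ρ₁(v₋−β)) + (p₂−p₊)/ρ₂ + 2(ρ₂−ρ₁)p₁/(ρ₁ρ₂). Then the following seven equations hold: (1) μ₀(ρ₋−ρ₁) = ρ₋v₋ − ρ₁β; (2) μ₀(ρ₋v₋ − ρ₁β) = ρ₋v₋² − ρ₁(β²+ε₁) + p₋ − p₁; (3) μ₀(½ρ₋v₋² + c_v p₋ − ½ρ₁(β²+ε₁+ε̃₁) − c_v p₁) = (½ρ₋v₋² + (c_v+1)p₋)v₋ − (½ρ₁(β²+ε₁+ε̃₁) + (c_v+1)p₁)β; (4) μ₁(ρ₁−ρ₂) = ρ₁β; (5) μ₁ρ₁β = ρ₁(β²+ε₁) − ρ₂ε₂ + p₁ − p₂; (6) μ₁(½ρ₁(β²+ε₁+ε̃₁)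 + c_v p₁ − ½ρ₂(ε₂+ε̃₂) − c_v p₂) = (½ρ₁(β²+ε₁+ε̃₁) + (c_v+1)p₁)β; (7) 0 = ρ₂ε₂ + p₂ − p₊. -/
/-!
Once the denominators `ρ1`, `ρ2`, `ρ1 - ρm`, `ρ2 - ρ1` and `vm - β` are nonzero, six of the seven
equations are identities of rational functions. The remaining one, the momentum balance across
the second jump, says that `β` is a root of the quadratic
`ρ1 ρ2 (ρ1 - ρm) β² + ρ1 ρm (ρ2 - ρ1) (vm - β)² = (pp - pm) (ρ2 - ρ1) (ρ1 - ρm)`,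
and `β` is by definition its smaller root. The ordering `ρm < ρ1 < ρK < ρ2` makes the
discriminant positive and puts `β` below `vm`.
-/

section Identities

variable {K : Type*} [Field K]

theorem quadratic_of_sq_eq {ρm ρ1 ρ2 vm Δp β : K} (h2m : ρ2 - ρm ≠ 0)
    (hsq : (ρm * (ρ2 - ρ1) * vm - ρ1 * (ρ2 - ρm) * β) ^ 2
      = (ρ2 - ρ1) * (ρ1 - ρm) * ((ρ2 - ρm) * Δp - ρm * ρ2 * vm ^ 2)) :
    ρ1 * ρ2 * (ρ1 - ρm) * β ^ 2 + ρ1 * ρm * (ρ2 - ρ1) * (vm - β) ^ 2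
      = Δp * (ρ2 - ρ1) * (ρ1 - ρm) :=
  mul_left_cancel₀ h2m (by linear_combination hsq)

variable [CharZero K]

theorem first_jump_equations {cv ρm pm vm ρ1 p1 β μ0 ε1 εt1 : K}
    (hρm : ρm ≠ 0) (hρ1 : ρ1 ≠ 0) (h1m : ρ1 - ρm ≠ 0) (hvβ : vm - β ≠ 0)
    (hμ0 : μ0 = (ρ1 * β - ρm * vm) / (ρ1 - ρm))
    (hε1 : ε1 = (1 / ρ1) * (pm - p1 + ρ1 * ρm / (ρ1 - ρm) * (vm - β) ^ 2))
    (hεt1 : εt1 = vm ^ 2 - β ^ 2 - 2 * cv * (p1 / ρ1 - pm / ρm)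
      - 2 * ((ρ1 - ρm) * (p1 * β - pm * vm)) / (ρm * ρ1 * (vm - β))
      + (p1 - pm) / ρ1 - ρm * (vm - β) ^ 2 / (ρ1 - ρm)) :
    μ0 * (ρm - ρ1) = ρm * vm - ρ1 * β ∧
    μ0 * (ρm * vm - ρ1 * β) = ρm * vm ^ 2 - ρ1 * (β ^ 2 + ε1) + pm - p1 ∧
    μ0 * (1 / 2 * ρm * vm ^ 2 + cv * pm - 1 / 2 * ρ1 * (β ^ 2 + ε1 + εt1) - cv * p1)
      = (1 / 2 * ρm * vm ^ 2 + (cv + 1) * pm) * vm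
        - (1 / 2 * ρ1 * (β ^ 2 + ε1 + εt1) + (cv + 1) * p1) * β := by
  subst hμ0 hε1 hεt1
  refine ⟨?_, ?_, ?_⟩ <;> field_simp <;> ring

theorem second_jump_equations {cv ρm pm pp vm ρ1 ρ2 p1 p2 β μ1 ε1 ε2 εt1 εt2 : K}
    (hρ1 : ρ1 ≠ 0) (hρ2 : ρ2 ≠ 0) (h1m : ρ1 - ρm ≠ 0) (h21 : ρ2 - ρ1 ≠ 0)
    (hquad : ρ1 * ρ2 * (ρ1 - ρm) * β ^ 2 + ρ1 * ρm * (ρ2 - ρ1) * (vm - β) ^ 2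
      = (pp - pm) * (ρ2 - ρ1) * (ρ1 - ρm))
    (hμ1 : μ1 = -(ρ1 * β) / (ρ2 - ρ1))
    (hε1 : ε1 = (1 / ρ1) * (pm - p1 + ρ1 * ρm / (ρ1 - ρm) * (vm - β) ^ 2))
    (hε2 : ε2 = (pp - p2) / ρ2)
    (hεt1 : εt1 = vm ^ 2 - β ^ 2 - 2 * cv * (p1 / ρ1 - pm / ρm)
      - 2 * ((ρ1 - ρm) * (p1 * β - pm * vm)) / (ρm * ρ1 * (vm - β))
      + (p1 - pm) / ρ1 - ρm * (vm - β) ^ 2 / (ρ1 - ρm))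
    (hεt2 : εt2 = vm ^ 2 - 2 * cv * (p2 / ρ2 - pm / ρm)
      - 2 * ((ρ1 - ρm) * (p1 * β - pm * vm)) / (ρm * ρ1 * (vm - β))
      + (p2 - pp) / ρ2 + 2 * (ρ2 - ρ1) / (ρ1 * ρ2) * p1) :
    μ1 * (ρ1 - ρ2) = ρ1 * β ∧
    μ1 * (ρ1 * β) = ρ1 * (β ^ 2 + ε1) - ρ2 * ε2 + p1 - p2 ∧
    μ1 * (1 / 2 * ρ1 * (β ^ 2 + ε1 + εt1) + cv * p1 - 1 / 2 * ρ2 * (ε2 + εt2) - cv * p2)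
      = (1 / 2 * ρ1 * (β ^ 2 + ε1 + εt1) + (cv + 1) * p1) * β ∧
    0 = ρ2 * ε2 + p2 - pp := by
  subst hμ1 hε1 hε2 hεt1 hεt2
  refine ⟨?_, ?_, ?_, ?_⟩
  · field_simp; ring
  · field_simp; linear_combination -hquad
  · field_simp; ring
  · field_simp; ring

end Identities

theorem sq_sub_mul_eq_of_eq_div_sub_sqrt_div {a b D S : ℝ} (hD : D ≠ 0) (hS : 0 ≤ S)
    (hb : b = a / D - √S / D) : (a - D * b) ^ 2 = S := by
  have h : a - D * b = √S := by rw [hb]; field_simp; ring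
  rw [h, Real.sq_sqrt hS]

theorem div_sub_sqrt_div_lt {a D S v : ℝ} (hD : 0 < D) (ha : a < D * v) :
    a / D - √S / D < v := by
  have := Real.sqrt_nonneg S
  rw [div_sub_div_same, div_lt_iff₀ hD]
  linarith

theorem discriminant_pos {ρm pm pp vm ρ2 : ℝ} (hρm : 0 < ρm) (hpmp : pm < pp)
    (hK : 0 < ρm * (pp - pm) / (pp - pm - ρm * vm ^ 2))
    (hρ2 : ρm * (pp - pm) / (pp - pm - ρm * vm ^ 2) < ρ2) :
    0 < (ρ2 - ρm) * (pp - pm) - ρm * ρ2 * vm ^ 2 := by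
  have hden : 0 < pp - pm - ρm * vm ^ 2 :=
    (div_pos_iff_of_pos_left (mul_pos hρm (sub_pos.2 hpmp))).1 hK
  have := (div_lt_iff₀ hden).1 hρ2
  linarith

theorem particular_subsolution_equations_general
    (cv ρm pm pp vm ρ1 ρ2 p1 p2 : ℝ)
    (hρm : 0 < ρm) (hpmp : pm < pp) (hvm : 0 < vm)
    (hρ1l : ρm < ρ1) (hρ1u : ρ1 < ρm * (pp - pm) / (pp - pm - ρm * vm ^ 2))
    (hρ2 : ρm * (pp - pm) / (pp - pm - ρm * vm ^ 2) < ρ2)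
    (β μ0 μ1 ε1 ε2 εt1 εt2 : ℝ)
    (hβ : β = ρm * (ρ2 - ρ1) * vm / (ρ1 * (ρ2 - ρm))
      - Real.sqrt ((ρ2 - ρ1) * (ρ1 - ρm)
          * ((ρ2 - ρm) * (pp - pm) - ρm * ρ2 * vm ^ 2)) / (ρ1 * (ρ2 - ρm)))
    (hμ0 : μ0 = (ρ1 * β - ρm * vm) / (ρ1 - ρm))
    (hμ1 : μ1 = -(ρ1 * β) / (ρ2 - ρ1))
    (hε1 : ε1 = (1 / ρ1) * (pm - p1 + ρ1 * ρm / (ρ1 - ρm) * (vm - β) ^ 2))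
    (hε2 : ε2 = (pp - p2) / ρ2)
    (hεt1 : εt1 = vm ^ 2 - β ^ 2 - 2 * cv * (p1 / ρ1 - pm / ρm)
      - 2 * ((ρ1 - ρm) * (p1 * β - pm * vm)) / (ρm * ρ1 * (vm - β))
      + (p1 - pm) / ρ1 - ρm * (vm - β) ^ 2 / (ρ1 - ρm))
    (hεt2 : εt2 = vm ^ 2 - 2 * cv * (p2 / ρ2 - pm / ρm)
      - 2 * ((ρ1 - ρm) * (p1 * β - pm * vm)) / (ρm * ρ1 * (vm - β))
      + (p2 - pp) / ρ2 + 2 * (ρ2 - ρ1) / (ρ1 * ρ2) * p1) :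
    μ0 * (ρm - ρ1) = ρm * vm - ρ1 * β ∧
    μ0 * (ρm * vm - ρ1 * β) = ρm * vm ^ 2 - ρ1 * (β ^ 2 + ε1) + pm - p1 ∧
    μ0 * (1 / 2 * ρm * vm ^ 2 + cv * pm - 1 / 2 * ρ1 * (β ^ 2 + ε1 + εt1) - cv * p1)
      = (1 / 2 * ρm * vm ^ 2 + (cv + 1) * pm) * vm
        - (1 / 2 * ρ1 * (β ^ 2 + ε1 + εt1) + (cv + 1) * p1) * β ∧
    μ1 * (ρ1 - ρ2) = ρ1 * β ∧
    μ1 * (ρ1 * β) = ρ1 * (β ^ 2 + ε1) - ρ2 * ε2 + p1 - p2 ∧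
    μ1 * (1 / 2 * ρ1 * (β ^ 2 + ε1 + εt1) + cv * p1 - 1 / 2 * ρ2 * (ε2 + εt2) - cv * p2)
      = (1 / 2 * ρ1 * (β ^ 2 + ε1 + εt1) + (cv + 1) * p1) * β ∧
    0 = ρ2 * ε2 + p2 - pp := by
  have hρ1 : 0 < ρ1 := hρm.trans hρ1l
  have h21 : ρ1 < ρ2 := hρ1u.trans hρ2
  have h2m : ρm < ρ2 := hρ1l.trans h21
  have hρ2pos : 0 < ρ2 := hρ1.trans h21
  have hD : 0 < ρ1 * (ρ2 - ρm) := mul_pos hρ1 (sub_pos.2 h2m)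
  have hβvm : β < vm := hβ ▸ div_sub_sqrt_div_lt hD
    (by linarith [mul_pos (mul_pos hρ2pos (sub_pos.2 hρ1l)) hvm])
  have hdisc := discriminant_pos hρm hpmp (hρ1.trans hρ1u) hρ2
  have hsq := sq_sub_mul_eq_of_eq_div_sub_sqrt_div hD.ne'
    (mul_pos (mul_pos (sub_pos.2 h21) (sub_pos.2 hρ1l)) hdisc).le hβ
  have hquad := quadratic_of_sq_eq (sub_pos.2 h2m).ne' hsq
  have h1m := (sub_pos.2 hρ1l).ne'
  obtain ⟨e1, e2, e3⟩ :=
    first_jump_equations hρm.ne' hρ1.ne' h1m (sub_pos.2 hβvm).ne' hμ0 hε1 hεt1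
  exact ⟨e1, e2, e3, second_jump_equations hρ1.ne' hρ2pos.ne' h1m (sub_pos.2 h21).ne' hquad
    hμ1 hε1 hε2 hεt1 hεt2⟩

/-- The particular fan subsolution quantities solve the seven Rankine–Hugoniot type
equations (Section 3.4 of the paper). -/
theorem particular_subsolution_equations
    (cv ρm pm pp vm ρ1 ρ2 p1 p2 : ℝ)
    (hcv : 1 / 2 < cv) (hρm : 0 < ρm) (hpm : 0 < pm) (hpmp : pm < pp) (hvm : 0 < vm)
    (hmain : ρm * vm ^ 2 < 2 * cv * (pp - pm) ^ 2 / ((2 * cv + 1) * pp + pm))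
    (hρ1l : ρm < ρ1) (hρ1u : ρ1 < ρm * (pp - pm) / (pp - pm - ρm * vm ^ 2))
    (hρ2 : ρm * (pp - pm) / (pp - pm - ρm * vm ^ 2) < ρ2)
    (hp1 : 0 < p1) (hp2 : 0 < p2)
    (β μ0 μ1 ε1 ε2 εt1 εt2 : ℝ)
    (hβ : β = ρm * (ρ2 - ρ1) * vm / (ρ1 * (ρ2 - ρm))
      - Real.sqrt ((ρ2 - ρ1) * (ρ1 - ρm)
          * ((ρ2 - ρm) * (pp - pm) - ρm * ρ2 * vm ^ 2)) / (ρ1 * (ρ2 - ρm)))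
    (hμ0 : μ0 = (ρ1 * β - ρm * vm) / (ρ1 - ρm))
    (hμ1 : μ1 = -(ρ1 * β) / (ρ2 - ρ1))
    (hε1 : ε1 = (1 / ρ1) * (pm - p1 + ρ1 * ρm / (ρ1 - ρm) * (vm - β) ^ 2))
    (hε2 : ε2 = (pp - p2) / ρ2)
    (hεt1 : εt1 = vm ^ 2 - β ^ 2 - 2 * cv * (p1 / ρ1 - pm / ρm)
      - 2 * ((ρ1 - ρm) * (p1 * β - pm * vm)) / (ρm * ρ1 * (vm - β))
      + (p1 - pm) / ρ1 - ρm * (vm - β) ^ 2 / (ρ1 - ρm))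
    (hεt2 : εt2 = vm ^ 2 - 2 * cv * (p2 / ρ2 - pm / ρm)
      - 2 * ((ρ1 - ρm) * (p1 * β - pm * vm)) / (ρm * ρ1 * (vm - β))
      + (p2 - pp) / ρ2 + 2 * (ρ2 - ρ1) / (ρ1 * ρ2) * p1) :
    μ0 * (ρm - ρ1) = ρm * vm - ρ1 * β ∧
    μ0 * (ρm * vm - ρ1 * β) = ρm * vm ^ 2 - ρ1 * (β ^ 2 + ε1) + pm - p1 ∧
    μ0 * (1 / 2 * ρm * vm ^ 2 + cv * pm - 1 / 2 * ρ1 * (β ^ 2 + ε1 + εt1) - cv * p1)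
      = (1 / 2 * ρm * vm ^ 2 + (cv + 1) * pm) * vm
        - (1 / 2 * ρ1 * (β ^ 2 + ε1 + εt1) + (cv + 1) * p1) * β ∧
    μ1 * (ρ1 - ρ2) = ρ1 * β ∧
    μ1 * (ρ1 * β) = ρ1 * (β ^ 2 + ε1) - ρ2 * ε2 + p1 - p2 ∧
    μ1 * (1 / 2 * ρ1 * (β ^ 2 + ε1 + εt1) + cv * p1 - 1 / 2 * ρ2 * (ε2 + εt2) - cv * p2)
      = (1 / 2 * ρ1 * (β ^ 2 + ε1 + εt1) + (cv + 1) * p1) * β ∧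
    0 = ρ2 * ε2 + p2 - pp :=
  particular_subsolution_equations_general cv ρm pm pp vm ρ1 ρ2 p1 p2 hρm hpmp hvm hρ1l hρ1u hρ2 β
    μ0 μ1 ε1 ε2 εt1 εt2 hβ hμ0 hμ1 hε1 hε2 hεt1 hεt2
end

section
/- Let c_v > 1/2, ρ₋ > 0, 0 < p₋ < p₊ and v₋ > 0 satisfy ρ₋v₋² < 2c_v(p₊−p₋)²/((2c_v+1)p₊ + p₋), set ρ_K := ρ₋(p₊−p₋)/(p₊−p₋−ρ₋v₋²), let ρ₋ < ρ₁ < ρ_K < ρ₂, and define β := (ρ₋(ρ₂−ρ₁)v₋)/(ρ₁(ρ₂−ρ₋)) − √((ρ₂−ρ₁)(ρ₁−ρ₋)[(ρ₂−ρ₋)(p₊−p₋)−ρ₋ρ₂v₋²])/(ρ₁(ρ₂−ρ₋)), μ₀ := (ρ₁β−ρ₋v₋)/(ρ₁−ρ₋), μ₁ := −ρ₁β/(ρ₂−ρ₁). Then β > 0 and μ₀ < μ₁ < 0. -/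
/-!
Write `a = p₊ - p₋` and `D = a - ρ₋v₋²`. Since `ρ₋ < ρ_K = ρ₋a/D`, the denominator `D` is positive,
so the hypotheses on `ρ₁, ρ₂` read `ρ₁D < ρ₋a < ρ₂D`. The radicand `E` of `β` is then positive and
`(ρ₋(ρ₂-ρ₁)v₋)² = E + (ρ₂-ρ₁)(ρ₂-ρ₋)(ρ₋a - ρ₁D)`, so `0 < √E < ρ₋(ρ₂-ρ₁)v₋`. Hence `β > 0` and
`ρ₁(ρ₂-ρ₋)β < ρ₋(ρ₂-ρ₁)v₋`, which after clearing denominators is exactly `μ₀ < μ₁`.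
-/

lemma sub_pos_of_lt_mul_div_sub {r a s : ℝ} (hr : 0 < r) (hs : 0 ≤ s)
    (h : r < r * a / (a - s)) : 0 < a - s := by
  by_contra! hle
  rcases hle.lt_or_eq with hneg | hzero
  · rw [lt_div_iff_of_neg hneg] at h
    nlinarith
  · rw [hzero, div_zero] at h
    exact h.not_gt hr

section Speeds

variable {ρm ρ1 ρ2 v a : ℝ}

lemma radicand_pos (hρ1 : ρm < ρ1) (hρ12 : ρ1 < ρ2) (h2 : ρm * a < ρ2 * (a - ρm * v ^ 2)) :
    0 < (ρ2 - ρ1) * (ρ1 - ρm) * ((ρ2 - ρm) * a - ρm * ρ2 * v ^ 2) := by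
  have hρ21 : 0 < ρ2 - ρ1 := sub_pos.2 hρ12
  have hρ1m : 0 < ρ1 - ρm := sub_pos.2 hρ1
  have hinner : 0 < (ρ2 - ρm) * a - ρm * ρ2 * v ^ 2 := by linarith
  positivity

lemma sqrt_radicand_lt (hρm : 0 < ρm) (hv : 0 < v) (hρ1 : ρm < ρ1) (hρ12 : ρ1 < ρ2)
    (h1 : ρ1 * (a - ρm * v ^ 2) < ρm * a) :
    √((ρ2 - ρ1) * (ρ1 - ρm) * ((ρ2 - ρm) * a - ρm * ρ2 * v ^ 2)) < ρm * (ρ2 - ρ1) * v := by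
  have hρ21 : 0 < ρ2 - ρ1 := sub_pos.2 hρ12
  have hρ2m : 0 < ρ2 - ρm := by linarith
  have hgap : 0 < (ρ2 - ρ1) * (ρ2 - ρm) * (ρm * a - ρ1 * (a - ρm * v ^ 2)) :=
    mul_pos (mul_pos hρ21 hρ2m) (sub_pos.2 h1)
  have hsq : (ρm * (ρ2 - ρ1) * v) ^ 2
      = (ρ2 - ρ1) * (ρ1 - ρm) * ((ρ2 - ρm) * a - ρm * ρ2 * v ^ 2)
        + (ρ2 - ρ1) * (ρ2 - ρm) * (ρm * a - ρ1 * (a - ρm * v ^ 2)) := by ring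
  rw [Real.sqrt_lt' (by positivity)]
  linarith

lemma div_sub_div_lt_neg_div (hρ1 : ρm < ρ1) (hρ12 : ρ1 < ρ2) {β : ℝ}
    (hβ : ρ1 * (ρ2 - ρm) * β < ρm * (ρ2 - ρ1) * v) :
    (ρ1 * β - ρm * v) / (ρ1 - ρm) < -(ρ1 * β) / (ρ2 - ρ1) := by
  rw [div_lt_div_iff₀ (by linarith) (by linarith)]
  linarith

end Speeds

lemma pos_and_mul_lt_of_eq_div_sub_sqrt_div {β M E d : ℝ} (hd : 0 < d) (hE : 0 < E)
    (hlt : √E < M) (hβ : β = M / d - √E / d) : 0 < β ∧ d * β < M := by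
  rw [hβ, ← sub_div]
  refine ⟨div_pos (sub_pos.2 hlt) hd, ?_⟩
  rw [mul_div_cancel₀ _ hd.ne']
  linarith [Real.sqrt_pos.2 hE]

theorem order_of_speeds_general
    (ρm pm pp vm ρ1 ρ2 : ℝ)
    (hρm : 0 < ρm) (hvm : 0 < vm)
    (hρ1l : ρm < ρ1) (hρ1u : ρ1 < ρm * (pp - pm) / (pp - pm - ρm * vm ^ 2))
    (hρ2 : ρm * (pp - pm) / (pp - pm - ρm * vm ^ 2) < ρ2)
    (β μ0 μ1 : ℝ)
    (hβ : β = ρm * (ρ2 - ρ1) * vm / (ρ1 * (ρ2 - ρm))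
      - Real.sqrt ((ρ2 - ρ1) * (ρ1 - ρm)
          * ((ρ2 - ρm) * (pp - pm) - ρm * ρ2 * vm ^ 2)) / (ρ1 * (ρ2 - ρm)))
    (hμ0 : μ0 = (ρ1 * β - ρm * vm) / (ρ1 - ρm))
    (hμ1 : μ1 = -(ρ1 * β) / (ρ2 - ρ1)) :
    0 < β ∧ μ0 < μ1 ∧ μ1 < 0 := by
  have hD : 0 < pp - pm - ρm * vm ^ 2 :=
    sub_pos_of_lt_mul_div_sub hρm (by positivity) (hρ1l.trans hρ1u)
  rw [lt_div_iff₀ hD] at hρ1u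
  rw [div_lt_iff₀ hD] at hρ2
  have hρ12 : ρ1 < ρ2 := lt_of_mul_lt_mul_right (hρ1u.trans hρ2) hD.le
  have hρ1 : 0 < ρ1 := hρm.trans hρ1l
  obtain ⟨hβpos, hβlt⟩ := pos_and_mul_lt_of_eq_div_sub_sqrt_div
    (mul_pos hρ1 (by linarith)) (radicand_pos hρ1l hρ12 hρ2)
    (sqrt_radicand_lt hρm hvm hρ1l hρ12 hρ1u) hβ
  subst hμ0 hμ1
  refine ⟨hβpos, div_sub_div_lt_neg_div hρ1l hρ12 hβlt, ?_⟩
  exact div_neg_of_neg_of_pos (neg_neg_of_pos (mul_pos hρ1 hβpos)) (sub_pos.2 hρ12)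

/-- Order of the speeds: `β > 0` and `μ₀ < μ₁ < 0` (Section 3.5 of the paper). -/
theorem order_of_speeds
    (cv ρm pm pp vm ρ1 ρ2 : ℝ)
    (hcv : 1 / 2 < cv) (hρm : 0 < ρm) (hpm : 0 < pm) (hpmp : pm < pp) (hvm : 0 < vm)
    (hmain : ρm * vm ^ 2 < 2 * cv * (pp - pm) ^ 2 / ((2 * cv + 1) * pp + pm))
    (hρ1l : ρm < ρ1) (hρ1u : ρ1 < ρm * (pp - pm) / (pp - pm - ρm * vm ^ 2))
    (hρ2 : ρm * (pp - pm) / (pp - pm - ρm * vm ^ 2) < ρ2)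
    (β μ0 μ1 : ℝ)
    (hβ : β = ρm * (ρ2 - ρ1) * vm / (ρ1 * (ρ2 - ρm))
      - Real.sqrt ((ρ2 - ρ1) * (ρ1 - ρm)
          * ((ρ2 - ρm) * (pp - pm) - ρm * ρ2 * vm ^ 2)) / (ρ1 * (ρ2 - ρm)))
    (hμ0 : μ0 = (ρ1 * β - ρm * vm) / (ρ1 - ρm))
    (hμ1 : μ1 = -(ρ1 * β) / (ρ2 - ρ1)) :
    0 < β ∧ μ0 < μ1 ∧ μ1 < 0 :=
  order_of_speeds_general ρm pm pp vm ρ1 ρ2 hρm hvm hρ1l hρ1u hρ2 β μ0 μ1 hβ hμ0 hμ1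
end

section
/- Let c_v > 1/2, ρ₋ > 0, 0 < p₋ < p₊ and v₋ > 0 satisfy ρ₋v₋² < 2c_v(p₊−p₋)²/((2c_v+1)p₊ + p₋), and set ρ_K := ρ₋(p₊−p₋)/(p₊−p₋−ρ₋v₋²). Then p₊ > p₋·(ρ_K/ρ₋)^{(c_v+1)/c_v}. (In particular, p₊ − p₋·(ρ_K/ρ₋)^{(c_v+1)/c_v} > p₋·f(p₊/p₋) where f(t) = t − (((2c_v+1)t+1)/((2c_v+1)+t))^{(c_v+1)/c_v}.) -/
/-! With `t = p₊/p₋` and `α = c_v/(c_v+1)`, the bound on `ρ₋v₋²` is equivalent to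
`ρ_K/ρ₋ < s := ((2c_v+1)t+1)/((2c_v+1)+t)`. In terms of `α`, `s = ((1+α)t+(1-α))/((1-α)t+(1+α))`
is the `[1/1]` Padé approximant of `t^α` at `t = 1`, which lies below `t^α` for `t ≥ 1`.
Raising to the power `1/α = (c_v+1)/c_v` gives `(ρ_K/ρ₋)^(1/α) < s^(1/α) ≤ t`. -/

open Set Real

lemma one_le_weighted_rpow_add {α x : ℝ} (hα0 : 0 ≤ α) (hα1 : α ≤ 1) (hx : 0 < x) :
    1 ≤ (1 - α) * x ^ α + α * x ^ (α - 1) := by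
  have hprod : (x ^ α) ^ (1 - α) * (x ^ (α - 1)) ^ α = 1 := by
    rw [← rpow_mul hx.le, ← rpow_mul hx.le, ← rpow_add hx]
    ring_nf
    exact rpow_zero x
  calc 1 = (x ^ α) ^ (1 - α) * (x ^ (α - 1)) ^ α := hprod.symm
    _ ≤ (1 - α) * x ^ α + α * x ^ (α - 1) :=
      geom_mean_le_arith_mean2_weighted (by linarith) hα0 (by positivity) (by positivity)
        (by ring)

/-- The derivative is `(1+α)((1-α)x^α + αx^(α-1) - 1)`, nonnegative by weighted AM–GM. -/
lemma monotoneOn_pade_gap {α : ℝ} (hα0 : 0 ≤ α) (hα1 : α ≤ 1) :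
    MonotoneOn (fun x : ℝ => (1 - α) * x ^ (1 + α) + (1 + α) * x ^ α - (1 + α) * x) (Ici 1) := by
  have hderiv : ∀ x : ℝ, 0 < x → HasDerivAt
      (fun x : ℝ => (1 - α) * x ^ (1 + α) + (1 + α) * x ^ α - (1 + α) * x)
      ((1 + α) * ((1 - α) * x ^ α + α * x ^ (α - 1) - 1)) x := by
    intro x hx
    have h := (((hasDerivAt_rpow_const (p := 1 + α) (Or.inl hx.ne')).const_mul (1 - α)).add
      ((hasDerivAt_rpow_const (p := α) (Or.inl hx.ne')).const_mul (1 + α))).sub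
      ((hasDerivAt_id x).const_mul (1 + α))
    refine h.congr_deriv ?_
    rw [add_sub_cancel_left]
    ring
  refine monotoneOn_of_hasDerivWithinAt_nonneg (convex_Ici 1)
    (fun x hx => (hderiv x (by linarith [mem_Ici.1 hx])).continuousAt.continuousWithinAt)
    (fun x hx => (hderiv x ?_).hasDerivWithinAt) (fun x hx => ?_)
  all_goals rw [interior_Ici, mem_Ioi] at hx
  · linarith
  · have := one_le_weighted_rpow_add hα0 hα1 (by linarith : (0:ℝ) < x)
    have : 0 ≤ 1 + α := by linarith
    positivity

lemma add_le_rpow_mul_add {α t : ℝ} (hα0 : 0 ≤ α) (hα1 : α ≤ 1) (ht : 1 ≤ t) :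
    (1 + α) * t + (1 - α) ≤ t ^ α * ((1 - α) * t + (1 + α)) := by
  have h := monotoneOn_pade_gap hα0 hα1 (mem_Ici.2 le_rfl) (mem_Ici.2 ht) ht
  simp only [one_rpow, rpow_add (by linarith : (0:ℝ) < t), rpow_one] at h
  linear_combination h

lemma rpow_pade_ratio_le {c t : ℝ} (hc : 0 < c) (ht : 1 ≤ t) :
    (((2 * c + 1) * t + 1) / ((2 * c + 1) + t)) ^ ((c + 1) / c) ≤ t := by
  set α := c / (c + 1) with hα
  have hα0 : 0 ≤ α := by positivity
  have hα1 : α ≤ 1 := (div_le_one (by linarith)).2 (by linarith)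
  have hratio : ((2 * c + 1) * t + 1) / ((2 * c + 1) + t)
      = ((1 + α) * t + (1 - α)) / ((1 - α) * t + (1 + α)) := by
    rw [div_eq_div_iff (by positivity) (by nlinarith), hα]
    field_simp
    ring
  have hle : ((2 * c + 1) * t + 1) / ((2 * c + 1) + t) ≤ t ^ α := by
    rw [hratio, div_le_iff₀ (by nlinarith)]
    exact add_le_rpow_mul_add hα0 hα1 ht
  have hexp : (c + 1) / c = α⁻¹ := by rw [hα, inv_div]
  rw [hexp, ← rpow_le_rpow_iff (z := α) (by positivity) (by positivity) (by positivity),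
    ← rpow_mul (by positivity), inv_mul_cancel₀ (by positivity), rpow_one]
  exact hle

section MomentumFlux

variable {c pm pp d : ℝ}

lemma sub_sub_pos_of_lt_flux_bound (hc : 0 ≤ c) (hpm : 0 < pm) (hpmp : pm < pp)
    (hd : d < 2 * c * (pp - pm) ^ 2 / ((2 * c + 1) * pp + pm)) : 0 < pp - pm - d := by
  have hQ : 0 < (2 * c + 1) * pp + pm := by nlinarith
  have hbound : 2 * c * (pp - pm) ^ 2 ≤ (pp - pm) * ((2 * c + 1) * pp + pm) := by
    nlinarith [mul_nonneg (sub_nonneg.2 hpmp.le) (by nlinarith : 0 ≤ pp + pm + 2 * c * pm)]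
  rw [lt_div_iff₀ hQ] at hd
  linarith [lt_of_mul_lt_mul_right (hd.trans_le hbound) hQ.le]

lemma div_sub_sub_lt_of_lt_flux_bound (hc : 0 ≤ c) (hpm : 0 < pm) (hpmp : pm < pp)
    (hd : d < 2 * c * (pp - pm) ^ 2 / ((2 * c + 1) * pp + pm)) :
    (pp - pm) / (pp - pm - d) < ((2 * c + 1) * pp + pm) / (pp + (2 * c + 1) * pm) := by
  have hQ : 0 < (2 * c + 1) * pp + pm := by nlinarith
  rw [div_lt_div_iff₀ (sub_sub_pos_of_lt_flux_bound hc hpm hpmp hd) (by nlinarith)]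
  rw [lt_div_iff₀ hQ] at hd
  linarith

end MomentumFlux

theorem pressure_at_rhoK_general
    (cv ρm pm pp vm ρK : ℝ)
    (hcv : 1 / 2 < cv) (hρm : 0 < ρm) (hpm : 0 < pm) (hpmp : pm < pp)
    (hmain : ρm * vm ^ 2 < 2 * cv * (pp - pm) ^ 2 / ((2 * cv + 1) * pp + pm))
    (hρK : ρK = ρm * (pp - pm) / (pp - pm - ρm * vm ^ 2)) :
    pm * (ρK / ρm) ^ ((cv + 1) / cv) < pp ∧
    pm * (pp / pm
        - (((2 * cv + 1) * (pp / pm) + 1) / ((2 * cv + 1) + pp / pm)) ^ ((cv + 1) / cv))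
      < pp - pm * (ρK / ρm) ^ ((cv + 1) / cv) := by
  have hcv0 : 0 < cv := by linarith
  have hd := sub_sub_pos_of_lt_flux_bound hcv0.le hpm hpmp hmain
  have hratio : ρK / ρm = (pp - pm) / (pp - pm - ρm * vm ^ 2) := by
    rw [hρK]
    field_simp
  have hpade : ((2 * cv + 1) * (pp / pm) + 1) / ((2 * cv + 1) + pp / pm)
      = ((2 * cv + 1) * pp + pm) / (pp + (2 * cv + 1) * pm) := by
    have : 0 < pp / pm := div_pos (by linarith) hpm
    rw [div_eq_div_iff (by linarith) (by nlinarith)]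
    field_simp
    ring
  have hlt : (ρK / ρm) ^ ((cv + 1) / cv)
      < (((2 * cv + 1) * (pp / pm) + 1) / ((2 * cv + 1) + pp / pm)) ^ ((cv + 1) / cv) := by
    refine rpow_lt_rpow (hratio ▸ div_pos (by linarith) hd).le ?_ (by positivity)
    rw [hratio, hpade]
    exact div_sub_sub_lt_of_lt_flux_bound hcv0.le hpm hpmp hmain
  have hle := rpow_pade_ratio_le hcv0 ((one_le_div hpm).2 hpmp.le)
  have hpt : pm * (pp / pm) = pp := mul_div_cancel₀ pp hpm.ne'
  constructor <;> nlinarith [mul_lt_mul_of_pos_left hlt hpm, mul_le_mul_of_nonneg_left hle hpm.le]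

/-- `p₊ > p₋ (ρ_K/ρ₋)^{(c_v+1)/c_v}`, in fact `p₊ - p₋ (ρ_K/ρ₋)^{(c_v+1)/c_v} > p₋ f(p₊/p₋)`. -/
theorem pressure_at_rhoK
    (cv ρm pm pp vm ρK : ℝ)
    (hcv : 1 / 2 < cv) (hρm : 0 < ρm) (hpm : 0 < pm) (hpmp : pm < pp) (hvm : 0 < vm)
    (hmain : ρm * vm ^ 2 < 2 * cv * (pp - pm) ^ 2 / ((2 * cv + 1) * pp + pm))
    (hρK : ρK = ρm * (pp - pm) / (pp - pm - ρm * vm ^ 2)) :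
    pm * (ρK / ρm) ^ ((cv + 1) / cv) < pp ∧
    pm * (pp / pm
        - (((2 * cv + 1) * (pp / pm) + 1) / ((2 * cv + 1) + pp / pm)) ^ ((cv + 1) / cv))
      < pp - pm * (ρK / ρm) ^ ((cv + 1) / cv) :=
  pressure_at_rhoK_general cv ρm pm pp vm ρK hcv hρm hpm hpmp hmain hρK
end

section
/- Let c_v > 1/2, ρ₋ > 0, 0 < p₋ < p₊ and v₋ > 0 satisfy ρ₋v₋² < 2c_v(p₊−p₋)²/((2c_v+1)p₊ + p₋), and set ρ_K := ρ₋(p₊−p₋)/(p₊−p₋−ρ₋v₋²). For ρ₋ < ρ₁ < ρ_K < ρ₂ define β := (ρ₋(ρ₂−ρ₁)v₋)/(ρ₁(ρ₂−ρ₋)) − √((ρ₂−ρ₁)(ρ₁−ρ₋)[(ρ₂−ρ₋)(p₊−p₋)−ρ₋ρ₂v₋²])/(ρ₁(ρ₂−ρ₋)), p₁ := p₋(ρ₁/ρ₋)^{(c_v+1)/c_v}, p₂ := p₋(ρ₂/ρ₋)^{(c_v+1)/c_v}, ε₁ := (1/ρ₁)(p₋ − p₁ + ρ₁ρ₋(v₋−β)²/(ρ₁−ρ₋)),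 ε₂ := (p₊−p₂)/ρ₂. Then there exists δ > 0 with ρ_K − δ > ρ₋ such that for all ρ₁ ∈ (ρ_K−δ, ρ_K) and all ρ₂ ∈ (ρ_K, ρ_K+δ), both ε₁ > 0 and ε₂ > 0. -/
/-- The second velocity component `β` of the subsolution in region `Ω₁`. -/
noncomputable def betaDef (ρm pm pp vm ρ1 ρ2 : ℝ) : ℝ :=
  ρm * (ρ2 - ρ1) * vm / (ρ1 * (ρ2 - ρm))
    - Real.sqrt ((ρ2 - ρ1) * (ρ1 - ρm)
        * ((ρ2 - ρm) * (pp - pm) - ρm * ρ2 * vm ^ 2)) / (ρ1 * (ρ2 - ρm))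

/-! At `ρ₁ = ρ₂ = ρ_K` we have `β = 0` and `ρ_K ρ₋ v₋² = (ρ_K - ρ₋)(p₊ - p₋)`, so `ε₁` and `ε₂`
both equal `(p₊ - p₋ (ρ_K/ρ₋)^γ) / ρ_K` with `γ = (c_v + 1)/c_v`; by continuity it suffices that
this is positive. With `μ = 2 c_v + 1` (so `γ = (μ + 1)/(μ - 1)`), the hypothesis on `ρ₋ v₋²` says
exactly `ρ_K/ρ₋ < (μ p₊ + p₋)/(p₊ + μ p₋)`, and `((μ x + 1)/(x + μ))^γ < x` for `x > 1`: after
taking logarithms the difference vanishes at `x = 1` and is strictly increasing. -/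

open Real Filter Topology Set

noncomputable def eps₁ (cv ρm pm pp vm ρ1 ρ2 : ℝ) : ℝ :=
  (1 / ρ1) * (pm - pm * (ρ1 / ρm) ^ ((cv + 1) / cv)
    + ρ1 * ρm * (vm - betaDef ρm pm pp vm ρ1 ρ2) ^ 2 / (ρ1 - ρm))

noncomputable def eps₂ (cv ρm pm pp ρ2 : ℝ) : ℝ :=
  (pp - pm * (ρ2 / ρm) ^ ((cv + 1) / cv)) / ρ2

lemma log_mobius_lt {μ x : ℝ} (hμ : 1 < μ) (hx : 1 < x) :
    (μ + 1) * (log (μ * x + 1) - log (x + μ)) < (μ - 1) * log x := by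
  set f : ℝ → ℝ := fun y => (μ - 1) * log y - (μ + 1) * (log (μ * y + 1) - log (y + μ))
  have hf : ∀ y : ℝ, 0 < y →
      HasDerivAt f ((μ - 1) * y⁻¹ - (μ + 1) * (μ / (μ * y + 1) - 1 / (y + μ))) y := by
    intro y hy
    have hnum : HasDerivAt (fun y : ℝ => log (μ * y + 1)) (μ / (μ * y + 1)) y := by
      simpa using (((hasDerivAt_id y).const_mul μ).add_const 1).log (by positivity)
    have hden : HasDerivAt (fun y : ℝ => log (y + μ)) (1 / (y + μ)) y :=
      ((hasDerivAt_id y).add_const μ).log (by positivity)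
    exact ((hasDerivAt_log hy.ne').const_mul (μ - 1)).sub ((hnum.sub hden).const_mul (μ + 1))
  have hmono : StrictMonoOn f (Ici 1) := by
    refine strictMonoOn_of_deriv_pos (convex_Ici 1)
      (fun y hy => (hf y (by linarith [mem_Ici.1 hy])).continuousAt.continuousWithinAt) ?_
    intro y hy
    rw [interior_Ici, mem_Ioi] at hy
    rw [(hf y (by linarith)).deriv]
    -- `f' y = μ (μ - 1) (y - 1)² / (y (μ y + 1) (y + μ))`
    have hpos : 0 < μ * (μ - 1) * (y - 1) ^ 2 / (y * (μ * y + 1) * (y + μ)) := by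
      have : 0 < (y - 1) ^ 2 := by nlinarith
      have : 0 < μ * (μ - 1) := by nlinarith
      positivity
    convert hpos using 1
    field_simp
    ring
  have h := hmono self_mem_Ici (mem_Ici.2 hx.le) hx
  simp only [f, log_one, mul_zero, mul_one, add_comm 1 μ, sub_self] at h
  linarith

lemma mul_rpow_lt_of_lt_mobius {cv p q r : ℝ} (hcv : 0 < cv) (hq : 0 < q) (hqp : q < p)
    (hr0 : 0 ≤ r) (hr : r < ((2 * cv + 1) * p + q) / (p + (2 * cv + 1) * q)) :
    q * r ^ ((cv + 1) / cv) < p := by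
  set μ := 2 * cv + 1
  set x := p / q
  have hx : 1 < x := (one_lt_div hq).2 hqp
  have hB : ((2 * cv + 1) * p + q) / (p + (2 * cv + 1) * q) = (μ * x + 1) / (x + μ) := by
    simp only [μ, x]
    field_simp
  have hexp : (cv + 1) / cv = (μ + 1) / (μ - 1) := by
    simp only [μ]
    field_simp
    ring
  have hnum : 0 < μ * x + 1 := by positivity
  have hden : 0 < x + μ := by positivity
  have hBx : ((μ * x + 1) / (x + μ)) ^ ((μ + 1) / (μ - 1)) < x := by
    rw [← log_lt_log_iff (by positivity) (by linarith), log_rpow (by positivity),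
      log_div hnum.ne' hden.ne', div_mul_eq_mul_div, div_lt_iff₀ (by linarith)]
    linarith [log_mobius_lt (by linarith : 1 < μ) hx]
  have hγ : 0 < (cv + 1) / cv := by positivity
  calc q * r ^ ((cv + 1) / cv)
      < q * x := by
        gcongr
        rw [hB] at hr
        rw [← hexp] at hBx
        exact (rpow_lt_rpow hr0 hr hγ).trans hBx
    _ = p := mul_div_cancel₀ p hq.ne'

section Threshold

variable {cv pm pp s : ℝ}

lemma sub_sub_pos_of_lt_mobius (hcv : 0 < cv) (hpm : 0 < pm) (hpmp : pm < pp)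
    (hs : s < 2 * cv * (pp - pm) ^ 2 / ((2 * cv + 1) * pp + pm)) : 0 < pp - pm - s := by
  have hN : 0 < (2 * cv + 1) * pp + pm := by nlinarith
  have hsq : 2 * cv * (pp - pm) ^ 2 < (pp - pm) * ((2 * cv + 1) * pp + pm) := by
    nlinarith [mul_pos (sub_pos.2 hpmp) hpm]
  rw [lt_div_iff₀ hN] at hs
  linarith [lt_of_mul_lt_mul_right (hs.trans hsq) hN.le]

lemma div_sub_lt_mobius (hcv : 0 < cv) (hpm : 0 < pm) (hpmp : pm < pp)
    (hs : s < 2 * cv * (pp - pm) ^ 2 / ((2 * cv + 1) * pp + pm)) :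
    (pp - pm) / (pp - pm - s) < ((2 * cv + 1) * pp + pm) / (pp + (2 * cv + 1) * pm) := by
  have hN : 0 < (2 * cv + 1) * pp + pm := by nlinarith
  rw [div_lt_div_iff₀ (sub_sub_pos_of_lt_mobius hcv hpm hpmp hs) (by nlinarith)]
  rw [lt_div_iff₀ hN] at hs
  nlinarith

end Threshold

section Continuity

variable {cv ρm pm pp vm : ℝ}

lemma betaDef_self (ρ : ℝ) : betaDef ρm pm pp vm ρ ρ = 0 := by
  simp [betaDef]

lemma continuousAt_betaDef {ρ1 ρ2 : ℝ} (h1 : ρ1 ≠ 0) (h2 : ρ2 ≠ ρm) :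
    ContinuousAt (fun q : ℝ × ℝ => betaDef ρm pm pp vm q.1 q.2) (ρ1, ρ2) := by
  have hden : ρ1 * (ρ2 - ρm) ≠ 0 := mul_ne_zero h1 (sub_ne_zero.2 h2)
  unfold betaDef
  refine ContinuousAt.sub ?_ ?_
  · exact ContinuousAt.div (by fun_prop) (by fun_prop) hden
  · exact ContinuousAt.div (continuous_sqrt.continuousAt.comp (by fun_prop)) (by fun_prop) hden

lemma continuousAt_eps₁ {ρ1 ρ2 : ℝ} (hρm : ρm ≠ 0) (h1 : ρ1 ≠ 0) (h1m : ρ1 ≠ ρm)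
    (h2 : ρ2 ≠ ρm) : ContinuousAt (fun q : ℝ × ℝ => eps₁ cv ρm pm pp vm q.1 q.2) (ρ1, ρ2) := by
  have hβ := continuousAt_betaDef (pm := pm) (pp := pp) (vm := vm) h1 h2
  unfold eps₁
  refine (continuousAt_const.div continuousAt_fst h1).mul
    ((continuousAt_const.sub (continuousAt_const.mul ?_)).add
      ((by fun_prop : ContinuousAt _ _).div (by fun_prop) (sub_ne_zero.2 h1m)))
  exact (continuousAt_fst.div_const ρm).rpow_const (Or.inl (div_ne_zero h1 hρm))

lemma continuousAt_eps₂ {ρ : ℝ} (hρm : ρm ≠ 0) (hρ : ρ ≠ 0) :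
    ContinuousAt (eps₂ cv ρm pm pp) ρ :=
  (continuousAt_const.sub (continuousAt_const.mul
    ((continuousAt_id.div_const ρm).rpow_const (Or.inl (div_ne_zero hρ hρm))))).div
    continuousAt_id hρ

end Continuity

lemma eps₁_self {cv ρm pm pp vm ρ : ℝ} (h : ρ * ρm * vm ^ 2 = (ρ - ρm) * (pp - pm))
    (hρ : ρ ≠ ρm) : eps₁ cv ρm pm pp vm ρ ρ = eps₂ cv ρm pm pp ρ := by
  have hkin : ρ * ρm * vm ^ 2 / (ρ - ρm) = pp - pm := by
    rw [div_eq_iff (sub_ne_zero.2 hρ), h, mul_comm]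
  rw [eps₁, eps₂, betaDef_self, sub_zero, hkin]
  ring

lemma exists_Ioo_of_eventually_nhds_diag {P : ℝ × ℝ → Prop} {a b : ℝ}
    (h : ∀ᶠ q in 𝓝 (a, a), P q) (hb : b < a) :
    ∃ δ > 0, b < a - δ ∧ ∀ x ∈ Ioo (a - δ) (a + δ), ∀ y ∈ Ioo (a - δ) (a + δ), P (x, y) := by
  obtain ⟨ε, hε, H⟩ := Metric.eventually_nhds_iff.1 h
  have hδε : min ε ((a - b) / 2) ≤ ε := min_le_left _ _
  have hδb : min ε ((a - b) / 2) ≤ (a - b) / 2 := min_le_right _ _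
  refine ⟨min ε ((a - b) / 2), lt_min hε (by linarith), by linarith, fun x hx y hy => H ?_⟩
  rw [Prod.dist_eq, Real.dist_eq, Real.dist_eq, max_lt_iff, abs_lt, abs_lt]
  exact ⟨⟨by linarith [hx.1], by linarith [hx.2]⟩, ⟨by linarith [hy.1], by linarith [hy.2]⟩⟩

/-- Subsolution condition, part 1: positivity of `ε₁` and `ε₂` for `ρ₁, ρ₂` close
to `ρ_K` (Section 3.7 of the paper). -/
theorem subsolution_condition_part1
    (cv ρm pm pp vm ρK : ℝ)
    (hcv : 1 / 2 < cv) (hρm : 0 < ρm) (hpm : 0 < pm) (hpmp : pm < pp) (hvm : 0 < vm)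
    (hmain : ρm * vm ^ 2 < 2 * cv * (pp - pm) ^ 2 / ((2 * cv + 1) * pp + pm))
    (hρK : ρK = ρm * (pp - pm) / (pp - pm - ρm * vm ^ 2)) :
    ∃ δ : ℝ, 0 < δ ∧ ρm < ρK - δ ∧
      ∀ ρ1 ρ2 : ℝ, ρK - δ < ρ1 → ρ1 < ρK → ρK < ρ2 → ρ2 < ρK + δ →
        0 < (1 / ρ1) * (pm - pm * (ρ1 / ρm) ^ ((cv + 1) / cv)
              + ρ1 * ρm * (vm - betaDef ρm pm pp vm ρ1 ρ2) ^ 2 / (ρ1 - ρm)) ∧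
        0 < (pp - pm * (ρ2 / ρm) ^ ((cv + 1) / cv)) / ρ2 := by
  have hcv0 : 0 < cv := by linarith
  have hden := sub_sub_pos_of_lt_mobius hcv0 hpm hpmp hmain
  have hratio : ρK / ρm = (pp - pm) / (pp - pm - ρm * vm ^ 2) := by
    rw [hρK]
    field_simp
  have hρK_gt : ρm < ρK := by
    rw [hρK, lt_div_iff₀ hden]
    nlinarith [mul_pos hρm (mul_pos hρm (pow_pos hvm 2))]
  have hpressure : pm * (ρK / ρm) ^ ((cv + 1) / cv) < pp :=
    mul_rpow_lt_of_lt_mobius hcv0 hpm hpmp (div_pos (by linarith) hρm).le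
      (hratio ▸ div_sub_lt_mobius hcv0 hpm hpmp hmain)
  have hε₂ : 0 < eps₂ cv ρm pm pp ρK := div_pos (sub_pos.2 hpressure) (by linarith)
  have hdiag : ρK * ρm * vm ^ 2 = (ρK - ρm) * (pp - pm) := by
    rw [hρK]
    field_simp
    ring
  have hε₁ : 0 < eps₁ cv ρm pm pp vm ρK ρK := by rwa [eps₁_self hdiag hρK_gt.ne']
  have hρK0 : ρK ≠ 0 := by linarith
  have hev₁ : ∀ᶠ q : ℝ × ℝ in 𝓝 (ρK, ρK), 0 < eps₁ cv ρm pm pp vm q.1 q.2 :=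
    (continuousAt_eps₁ hρm.ne' hρK0 hρK_gt.ne' hρK_gt.ne').eventually (lt_mem_nhds hε₁)
  have hev₂ : ∀ᶠ ρ in 𝓝 ρK, 0 < eps₂ cv ρm pm pp ρ :=
    (continuousAt_eps₂ hρm.ne' hρK0).eventually (lt_mem_nhds hε₂)
  obtain ⟨δ, hδ, hρm_lt, H⟩ := exists_Ioo_of_eventually_nhds_diag
    (hev₁.and (continuousAt_snd (p := (ρK, ρK)) hev₂)) hρK_gt
  exact ⟨δ, hδ, hρm_lt, fun ρ1 ρ2 h1 h1' h2 h2' => H ρ1 ⟨h1, by linarith⟩ ρ2 ⟨by linarith, h2'⟩⟩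
end

section
/- Let c_v > 1/2, ρ₋ > 0, 0 < p₋ < p₊ and v₋ > 0 satisfy ρ₋v₋² < p₊ − p₋, set ρ_K := ρ₋(p₊−p₋)/(p₊−p₋−ρ₋v₋²) and p_K := p₋(ρ_K/ρ₋)^{(c_v+1)/c_v}, and define Ẽ₁ := v₋² − 2c_v(p_K/ρ_K − p₋/ρ₋) + 2(ρ_K−ρ₋)p₋/(ρ₋ρ_K) + (p_K−p₋)/ρ_K − ρ₋v₋²/(ρ_K−ρ₋) and Ẽ₂ := v₋² − 2c_v(p_K/ρ_K − p₋/ρ₋) + 2(ρ_K−ρ₋)p₋/(ρ₋ρ_K) + (p_K−p₊)/ρ_K. Then Ẽ₁ = Ẽ₂ = (p₋/ρ₋)·[(1−2c_v)·((p₊−p₋)/(p₊−p₋−ρ₋v₋²))^{1/c_v} + 2c_v + (ρ₋v₋²(p₋+2p₊) − p₊(p₊−p₋))/(p₋(p₊−p₋))]. -/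
/-! With `r := ρ_K/ρ₋ = (p₊ - p₋)/(p₊ - p₋ - ρ₋v₋²)` one has `p_K = p₋ r · r^{1/c_v}`, so
`p_K/ρ_K = (p₋/ρ₋) r^{1/c_v}` and `Ẽ₂` is affine in `r^{1/c_v}`; the remaining terms only
involve `1/ρ_K = (p₊ - p₋ - ρ₋v₋²)/(ρ₋(p₊ - p₋))`. The two extra terms of `Ẽ₁` cancel, since
`(p₊ - p₋)/ρ_K` and `ρ₋v₋²/(ρ_K - ρ₋)` both equal `(p₊ - p₋ - ρ₋v₋²)/ρ₋`. -/

open Real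

theorem Real.rpow_add_one_div_self {r c : ℝ} (hr : r ≠ 0) (hc : c ≠ 0) :
    r ^ ((c + 1) / c) = r * r ^ (1 / c) := by
  rw [show (c + 1) / c = 1 / c + 1 by field_simp; ring, rpow_add_one hr, mul_comm]

section Compression

variable {ρ ρK A b : ℝ}

theorem sub_eq_of_eq_mul_div_sub (hρK : ρK = ρ * A / (A - b)) (hAb : A - b ≠ 0) :
    ρK - ρ = ρ * b / (A - b) := by
  rw [hρK]; field_simp; ring

theorem div_eq_div_sub_of_eq_mul_div_sub (hρK : ρK = ρ * A / (A - b)) (hρ : ρ ≠ 0)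
    (hA : A ≠ 0) (hb : b ≠ 0) (hAb : A - b ≠ 0) :
    A / ρK = b / (ρK - ρ) := by
  rw [sub_eq_of_eq_mul_div_sub hρK hAb, hρK]
  field_simp

end Compression

theorem Etilde₂_eq_of_pK_eq {cv ρm pm pp vm ρK pK x : ℝ} (hρm : ρm ≠ 0) (hρK : ρK ≠ 0)
    (hpK : pK = pm * (ρK / ρm) * x) :
    vm ^ 2 - 2 * cv * (pK / ρK - pm / ρm) + 2 * (ρK - ρm) * pm / (ρm * ρK) + (pK - pp) / ρK
      = pm / ρm * ((1 - 2 * cv) * x + 2 * cv) + vm ^ 2 + 2 * pm / ρm - (2 * pm + pp) / ρK := by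
  subst hpK
  field_simp
  ring

theorem Etilde_formula_general
    (cv ρm pm pp vm ρK pK Et1 Et2 : ℝ)
    (hcv : 1 / 2 < cv) (hρm : 0 < ρm) (hpm : 0 < pm) (hvm : 0 < vm)
    (hmain : ρm * vm ^ 2 < pp - pm)
    (hρK : ρK = ρm * (pp - pm) / (pp - pm - ρm * vm ^ 2))
    (hpK : pK = pm * (ρK / ρm) ^ ((cv + 1) / cv))
    (hEt1 : Et1 = vm ^ 2 - 2 * cv * (pK / ρK - pm / ρm)
      + 2 * (ρK - ρm) * pm / (ρm * ρK) + (pK - pm) / ρK - ρm * vm ^ 2 / (ρK - ρm))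
    (hEt2 : Et2 = vm ^ 2 - 2 * cv * (pK / ρK - pm / ρm)
      + 2 * (ρK - ρm) * pm / (ρm * ρK) + (pK - pp) / ρK) :
    Et1 = Et2 ∧
    Et1 = pm / ρm * ((1 - 2 * cv)
        * ((pp - pm) / (pp - pm - ρm * vm ^ 2)) ^ (1 / cv) + 2 * cv
        + (ρm * vm ^ 2 * (pm + 2 * pp) - pp * (pp - pm)) / (pm * (pp - pm))) := by
  have hb : 0 < ρm * vm ^ 2 := by positivity
  have hD : 0 < pp - pm - ρm * vm ^ 2 := by linarith
  have hA : 0 < pp - pm := by linarith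
  have hratio : ρK / ρm = (pp - pm) / (pp - pm - ρm * vm ^ 2) := by
    rw [hρK]; field_simp
  have hρK0 : 0 < ρK := by rw [hρK]; positivity
  have hEt : Et1 = Et2 := by
    have := div_eq_div_sub_of_eq_mul_div_sub hρK hρm.ne' hA.ne' hb.ne' hD.ne'
    rw [hEt1, hEt2]
    linear_combination this
  refine ⟨hEt, ?_⟩
  have hpK' : pK = pm * (ρK / ρm) * (ρK / ρm) ^ (1 / cv) := by
    rw [hpK, rpow_add_one_div_self (by positivity) (by linarith), mul_assoc]
  rw [hEt, hEt2, Etilde₂_eq_of_pK_eq hρm.ne' hρK0.ne' hpK', hratio, hρK]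
  field_simp
  ring

/-- The quantities `Ẽ₁` and `Ẽ₂` coincide and equal the explicit expression in the proof
of the smallness theorem (Section 3.8 of the paper). -/
theorem Etilde_formula
    (cv ρm pm pp vm ρK pK Et1 Et2 : ℝ)
    (hcv : 1 / 2 < cv) (hρm : 0 < ρm) (hpm : 0 < pm) (hpmp : pm < pp) (hvm : 0 < vm)
    (hmain : ρm * vm ^ 2 < pp - pm)
    (hρK : ρK = ρm * (pp - pm) / (pp - pm - ρm * vm ^ 2))
    (hpK : pK = pm * (ρK / ρm) ^ ((cv + 1) / cv))
    (hEt1 : Et1 = vm ^ 2 - 2 * cv * (pK / ρK - pm / ρm)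
      + 2 * (ρK - ρm) * pm / (ρm * ρK) + (pK - pm) / ρK - ρm * vm ^ 2 / (ρK - ρm))
    (hEt2 : Et2 = vm ^ 2 - 2 * cv * (pK / ρK - pm / ρm)
      + 2 * (ρK - ρm) * pm / (ρm * ρK) + (pK - pp) / ρK) :
    Et1 = Et2 ∧
    Et1 = pm / ρm * ((1 - 2 * cv)
        * ((pp - pm) / (pp - pm - ρm * vm ^ 2)) ^ (1 / cv) + 2 * cv
        + (ρm * vm ^ 2 * (pm + 2 * pp) - pp * (pp - pm)) / (pm * (pp - pm))) :=
  Etilde_formula_general cv ρm pm pp vm ρK pK Et1 Et2 hcv hρm hpm hvm hmain hρK hpK hEt1 hEt2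
end

section
/- Let c_v > 1/2, ρ₋ > 0 and 0 < p₋ < p₊, and set W := 2c_v(p₊−p₋)²/((2c_v+1)p₊ + p₋). Define Ẽ := (p₋/ρ₋)·[(1−2c_v)·((p₊−p₋)/(p₊−p₋−W))^{1/c_v} + 2c_v + (W(p₋+2p₊) − p₊(p₊−p₋))/(p₋(p₊−p₋))]. Then Ẽ = (p₋(2c_v−1)((2c_v+1)p₋ + p₊))/(ρ₋((2c_v+1)p₊ + p₋)) · f(p₊/p₋), where f(t) = t − (((2c_v+1)t+1)/((2c_v+1)+t))^{(c_v+1)/c_v}, and consequently Ẽ > 0. -/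
/-!
With `t = p₊/p₋` and `R(t) = ((2c+1)t + 1)/((2c+1) + t)`, both `(p₊-p₋)/(p₊-p₋-W)` and the base
of the power in `f` equal `R(t)`, after which the formula for `Ẽ` is a rational identity in `t`,
`R(t)` and `R(t)^(1/c)`. Positivity of `f` on `t > 1` is the inequality `R(t)^(c+1) < t^c`: the
function `c log t - (c+1) log R(t)` vanishes at `t = 1` and has derivative
`c(2c+1)(t-1)² / (t((2c+1)t+1)((2c+1)+t)) > 0`.
-/

open Real Set

noncomputable def pressureRatio (c t : ℝ) : ℝ := ((2 * c + 1) * t + 1) / ((2 * c + 1) + t)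

noncomputable def logGap (c t : ℝ) : ℝ := c * log t - (c + 1) * log (pressureRatio c t)

section
variable {c t : ℝ}

lemma pressureRatio_pos (hc : 0 ≤ c) (ht : 0 < t) : 0 < pressureRatio c t := by
  unfold pressureRatio; positivity

lemma hasDerivAt_pressureRatio (hc : 0 ≤ c) (ht : 0 < t) :
    HasDerivAt (pressureRatio c) (4 * c * (c + 1) / ((2 * c + 1) + t) ^ 2) t := by
  have hden : (2 * c + 1) + t ≠ 0 := by positivity
  refine ((((hasDerivAt_id t).const_mul (2 * c + 1)).add_const 1).div
    ((hasDerivAt_id t).const_add (2 * c + 1)) hden).congr_deriv ?_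
  simp only [id, mul_one]
  ring

lemma hasDerivAt_logGap (hc : 0 ≤ c) (ht : 0 < t) :
    HasDerivAt (logGap c)
      (c * (2 * c + 1) * (t - 1) ^ 2 / (t * (((2 * c + 1) * t + 1) * ((2 * c + 1) + t)))) t := by
  have hR := pressureRatio_pos hc ht
  refine (((hasDerivAt_log ht.ne').const_mul c).sub
    (((hasDerivAt_pressureRatio hc ht).log hR.ne').const_mul (c + 1))).congr_deriv ?_
  unfold pressureRatio
  have h₁ : 0 < (2 * c + 1) * t + 1 := by positivity
  have h₂ : 0 < (2 * c + 1) + t := by positivity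
  field_simp
  ring

lemma strictMonoOn_logGap (hc : 0 < c) : StrictMonoOn (logGap c) (Ici 1) := by
  have hderiv : ∀ x ∈ Ici (1 : ℝ), HasDerivAt (logGap c) _ x := fun x hx =>
    hasDerivAt_logGap hc.le (zero_lt_one.trans_le hx)
  refine strictMonoOn_of_deriv_pos (convex_Ici 1)
    (fun x hx => (hderiv x hx).continuousAt.continuousWithinAt) fun x hx => ?_
  rw [interior_Ici] at hx
  have hx0 : 0 < x := zero_lt_one.trans hx
  have hx1 : 0 < (x - 1) ^ 2 := pow_pos (sub_pos.2 hx) 2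
  rw [(hderiv x (mem_Ici.2 hx.le)).deriv]
  positivity

lemma pressureRatio_rpow_lt (hc : 0 < c) (ht : 1 < t) : pressureRatio c t ^ ((c + 1) / c) < t := by
  have ht0 : 0 < t := zero_lt_one.trans ht
  have hR := pressureRatio_pos hc.le ht0
  have hgap : logGap c 1 < logGap c t := strictMonoOn_logGap hc self_mem_Ici ht.le ht
  have hlog : (c + 1) * log (pressureRatio c t) < c * log t := by
    simpa [logGap, pressureRatio] using hgap
  rw [← log_lt_log_iff (rpow_pos_of_pos hR _) ht0, log_rpow hR, div_mul_eq_mul_div,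
    div_lt_iff₀ hc]
  linarith

end

section
variable {c pm pp : ℝ}

lemma pressureRatio_div (hpm : pm ≠ 0) :
    pressureRatio c (pp / pm) = ((2 * c + 1) * pp + pm) / ((2 * c + 1) * pm + pp) := by
  rw [pressureRatio, ← mul_div_mul_right _ _ hpm]
  congr 1 <;> field_simp

lemma sub_div_sub_eq_pressureRatio (hc : 0 < c) (hpm : 0 < pm) (hpmp : pm < pp) :
    (pp - pm) / (pp - pm - 2 * c * (pp - pm) ^ 2 / ((2 * c + 1) * pp + pm))
      = pressureRatio c (pp / pm) := by
  have hd : pp - pm ≠ 0 := (sub_pos.2 hpmp).ne'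
  have h₁ : (2 * c + 1) * pp + pm ≠ 0 := by nlinarith
  have hW : pp - pm - 2 * c * (pp - pm) ^ 2 / ((2 * c + 1) * pp + pm)
      = (pp - pm) * ((2 * c + 1) * pm + pp) / ((2 * c + 1) * pp + pm) := by
    rw [eq_div_iff h₁, sub_mul, div_mul_cancel₀ _ h₁]
    ring
  rw [hW, pressureRatio_div hpm.ne', div_div_eq_mul_div, mul_div_mul_left _ _ hd]

lemma Etilde_eq_mul_sub_pressureRatio_mul (ρm S : ℝ) (hc : 0 < c) (hpm : 0 < pm) (hpmp : pm < pp) :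
    pm / ρm * ((1 - 2 * c) * S + 2 * c
        + (2 * c * (pp - pm) ^ 2 / ((2 * c + 1) * pp + pm) * (pm + 2 * pp) - pp * (pp - pm))
          / (pm * (pp - pm)))
      = pm * (2 * c - 1) * ((2 * c + 1) * pm + pp) / (ρm * ((2 * c + 1) * pp + pm))
        * (pp / pm - pressureRatio c (pp / pm) * S) := by
  have hd : pp - pm ≠ 0 := (sub_pos.2 hpmp).ne'
  have h₁ : pp * (2 * c + 1) + pm ≠ 0 := by nlinarith
  have h₂ : pm * (2 * c + 1) + pp ≠ 0 := by nlinarith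
  rw [pressureRatio_div hpm.ne']
  field_simp
  ring

end

/-- The limiting quantity `Ẽ` equals the product formula involving `f(p₊/p₋)` and is
therefore positive (Section 3.8 of the paper). -/
theorem Etilde_positive
    (cv ρm pm pp W Et : ℝ)
    (hcv : 1 / 2 < cv) (hρm : 0 < ρm) (hpm : 0 < pm) (hpmp : pm < pp)
    (hW : W = 2 * cv * (pp - pm) ^ 2 / ((2 * cv + 1) * pp + pm))
    (hEt : Et = pm / ρm * ((1 - 2 * cv)
        * ((pp - pm) / (pp - pm - W)) ^ (1 / cv) + 2 * cv
        + (W * (pm + 2 * pp) - pp * (pp - pm)) / (pm * (pp - pm)))) :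
    Et = pm * (2 * cv - 1) * ((2 * cv + 1) * pm + pp)
        / (ρm * ((2 * cv + 1) * pp + pm))
        * (pp / pm
          - (((2 * cv + 1) * (pp / pm) + 1) / ((2 * cv + 1) + pp / pm)) ^ ((cv + 1) / cv)) ∧
    0 < Et := by
  have hc : 0 < cv := by linarith
  have hR : 0 < pressureRatio cv (pp / pm) :=
    pressureRatio_pos hc.le (div_pos (hpm.trans hpmp) hpm)
  have hformula : Et = pm * (2 * cv - 1) * ((2 * cv + 1) * pm + pp)
      / (ρm * ((2 * cv + 1) * pp + pm)) * (pp / pm - pressureRatio cv (pp / pm) ^ ((cv + 1) / cv)) := by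
    have hexp : (cv + 1) / cv = 1 + 1 / cv := by field_simp
    rw [hexp, rpow_add hR, rpow_one, hEt, hW, sub_div_sub_eq_pressureRatio hc hpm hpmp]
    exact Etilde_eq_mul_sub_pressureRatio_mul ρm _ hc hpm hpmp
  refine ⟨hformula, hformula ▸ mul_pos ?_ (sub_pos.2 ?_)⟩
  · have h₁ : 0 < (2 * cv + 1) * pp + pm := by nlinarith
    have h₂ : 0 < (2 * cv + 1) * pm + pp := by nlinarith
    exact div_pos (mul_pos (mul_pos hpm (by linarith)) h₂) (mul_pos hρm h₁)
  · exact pressureRatio_rpow_lt hc ((one_lt_div hpm).2 hpmp)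
end
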